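/- arXiv:2310.18410 — 2 statements merged into one kernel-verified Lean document; each statement's English description precedes it below -/
import Mathlib

section
/- For each integer k ≥ 1 and real E with 2^k·E not an integer, the QPE kernel f_k(E) = (1/2^(2k)) · sin²(π·2^k·E)/sin²(π·E) satisfies 0 ≤ f_k(E) ≤ 1; moreover, summing over the shifted arguments, ∑_{x=0}^{2^k − 1} (1/2^(2k)) · sin²(π·2^k·E)/sin²(π·(E − x/2^k)) = 1 for every real E with 2^k·E ∉ ℤ. -/
/-!
With `N = 2^k`, the kernel `sin²(πNθ) / sin²(πθ)` is `‖∑_{j<N} e^{2πijθ}‖²`, a sum of `N` unit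
vectors, hence at most `N²`. Shifting `θ` by `-x/N` multiplies the `j`-th term by `ζ^{xj}` for the
primitive root of unity `ζ = e^{-2πi/N}` and leaves the numerator unchanged, so the sum over `x`
is Parseval's identity for the discrete Fourier transform on `ℤ/N`, which gives `N · N`.
-/

open Complex Finset
open scoped Real ComplexConjugate

lemma norm_exp_two_pi_I_mul_sub_one (θ : ℝ) :
    ‖exp (2 * π * I * θ) - 1‖ = 2 * |Real.sin (π * θ)| := by
  have h := norm_exp_I_mul_ofReal_sub_one (2 * π * θ)
  push_cast at h
  rw [show I * (2 * π * θ) = 2 * π * I * θ by ring, show 2 * π * θ / 2 = π * θ by ring] at h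
  rw [h, Real.norm_eq_abs, abs_mul, abs_two]

lemma norm_exp_two_pi_I_mul (θ : ℝ) : ‖exp (2 * π * I * θ)‖ = 1 := by
  simpa [mul_comm _ I, mul_assoc] using norm_exp_ofReal_mul_I (2 * π * θ)

lemma norm_geom_sum_exp_sq (N : ℕ) {θ : ℝ} (hθ : Real.sin (π * θ) ≠ 0) :
    ‖∑ j ∈ range N, exp (2 * π * I * θ) ^ j‖ ^ 2 =
      Real.sin (π * N * θ) ^ 2 / Real.sin (π * θ) ^ 2 := by
  have hne : exp (2 * π * I * θ) ≠ 1 := by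
    intro h
    have := norm_exp_two_pi_I_mul_sub_one θ
    rw [h, sub_self, norm_zero] at this
    exact hθ (abs_eq_zero.1 (by linarith))
  have hpow : exp (2 * π * I * θ) ^ N = exp (2 * π * I * (N * θ : ℝ)) := by
    rw [← exp_nat_mul]; push_cast; ring_nf
  rw [geom_sum_eq hne, norm_div, hpow, norm_exp_two_pi_I_mul_sub_one,
    norm_exp_two_pi_I_mul_sub_one, div_pow, mul_pow, mul_pow, sq_abs, sq_abs, ← mul_assoc,
    mul_div_mul_left _ _ (by norm_num)]

lemma norm_geom_sum_le_of_norm_eq_one {w : ℂ} (hw : ‖w‖ = 1) (N : ℕ) :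
    ‖∑ j ∈ range N, w ^ j‖ ≤ N := by
  simpa [hw] using norm_sum_le (range N) (w ^ ·)

lemma sin_sq_mul_div_sin_sq_le (N : ℕ) (θ : ℝ) :
    Real.sin (π * N * θ) ^ 2 / Real.sin (π * θ) ^ 2 ≤ N ^ 2 := by
  by_cases hθ : Real.sin (π * θ) = 0
  · simp [hθ]
  rw [← norm_geom_sum_exp_sq N hθ]
  gcongr
  exact norm_geom_sum_le_of_norm_eq_one (norm_exp_two_pi_I_mul θ) N

lemma IsPrimitiveRoot.sum_pow_mul_conj_pow {ζ : ℂ} {N : ℕ} (hζ : IsPrimitiveRoot ζ N)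
    {j j' : ℕ} (hj : j < N) (hj' : j' < N) :
    ∑ x ∈ range N, ζ ^ (x * j) * conj (ζ ^ (x * j')) = if j = j' then (N : ℂ) else 0 := by
  have hζ0 : ζ ≠ 0 := hζ.ne_zero (by omega)
  have hconj : conj ζ = ζ⁻¹ := (inv_eq_conj (hζ.norm'_eq_one (by omega))).symm
  have hterm : ∀ x, ζ ^ (x * j) * conj (ζ ^ (x * j')) = (ζ ^ j * (ζ ^ j')⁻¹) ^ x := by
    intro x
    rw [map_pow, hconj, mul_pow, inv_pow, inv_pow, ← pow_mul, ← pow_mul, mul_comm j, mul_comm j']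
  simp_rw [hterm]
  split_ifs with h
  · simp [h, hζ0]
  · have hw : ζ ^ j * (ζ ^ j')⁻¹ ≠ 1 := by
      rw [Ne, mul_inv_eq_one₀ (pow_ne_zero _ hζ0)]
      exact fun e => h (hζ.pow_inj hj hj' e)
    rw [geom_sum_eq hw, mul_pow, inv_pow, ← pow_mul, ← pow_mul, mul_comm j, mul_comm j',
      pow_mul, pow_mul, hζ.pow_eq_one]
    simp

lemma IsPrimitiveRoot.sum_norm_sq_sum_mul_pow {ζ : ℂ} {N : ℕ} (hζ : IsPrimitiveRoot ζ N)
    (c : ℕ → ℂ) :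
    ∑ x ∈ range N, ‖∑ j ∈ range N, c j * ζ ^ (x * j)‖ ^ 2 = N * ∑ j ∈ range N, ‖c j‖ ^ 2 := by
  apply ofReal_injective
  push_cast
  simp_rw [← mul_conj', map_sum, sum_mul_sum, map_mul]
  calc ∑ x ∈ range N, ∑ j ∈ range N, ∑ j' ∈ range N,
          c j * ζ ^ (x * j) * (conj (c j') * conj (ζ ^ (x * j')))
      = ∑ j ∈ range N, ∑ j' ∈ range N,
          c j * conj (c j') * ∑ x ∈ range N, ζ ^ (x * j) * conj (ζ ^ (x * j')) := by
        rw [sum_comm]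
        refine sum_congr rfl fun j _ => ?_
        rw [sum_comm]
        refine sum_congr rfl fun j' _ => ?_
        rw [mul_sum]
        exact sum_congr rfl fun x _ => by ring
    _ = ∑ j ∈ range N, N * (c j * conj (c j)) := by
        refine sum_congr rfl fun j hj => ?_
        rw [sum_congr rfl fun j' hj' => by
          rw [hζ.sum_pow_mul_conj_pow (mem_range.1 hj) (mem_range.1 hj'), mul_ite, mul_zero]]
        rw [sum_ite_eq, if_pos hj, mul_comm]
    _ = N * ∑ j ∈ range N, c j * conj (c j) := by rw [mul_sum]

lemma sin_pi_mul_sub_div_ne_zero {N : ℕ} (hN : N ≠ 0) {E : ℝ} (hE : ∀ n : ℤ, (N : ℝ) * E ≠ n)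
    (x : ℕ) : Real.sin (π * (E - x / N)) ≠ 0 := by
  rw [Ne, Real.sin_eq_zero_iff]
  rintro ⟨n, hn⟩
  apply hE (N * n + x)
  have : (n : ℝ) = E - x / N := mul_right_cancel₀ Real.pi_ne_zero (by linarith)
  push_cast
  rw [this]
  field_simp
  ring

lemma sin_sq_pi_mul_mul_sub_div {N : ℕ} (hN : N ≠ 0) (E : ℝ) (x : ℕ) :
    Real.sin (π * N * (E - x / N)) ^ 2 = Real.sin (π * N * E) ^ 2 := by
  have : π * N * (E - x / N) = π * N * E - x * π := by field_simp
  rw [this, Real.sin_sub_nat_mul_pi, mul_pow, ← pow_mul, mul_comm x, pow_mul]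
  norm_num

lemma sum_sin_sq_div_sin_sq_sub {N : ℕ} (hN : N ≠ 0) {E : ℝ} (hE : ∀ n : ℤ, (N : ℝ) * E ≠ n) :
    ∑ x ∈ range N, Real.sin (π * N * E) ^ 2 / Real.sin (π * (E - x / N)) ^ 2 = N ^ 2 := by
  set ζ := exp (2 * π * I / N)
  have hζ : IsPrimitiveRoot ζ⁻¹ N := (isPrimitiveRoot_exp N hN).inv
  have hshift : ∀ x : ℕ, exp (2 * π * I * (E - x / N : ℝ)) = exp (2 * π * I * E) * ζ⁻¹ ^ x := by
    intro x
    rw [← exp_neg, ← exp_nat_mul, ← exp_add]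
    push_cast
    ring_nf
  have hterm : ∀ x : ℕ, Real.sin (π * N * E) ^ 2 / Real.sin (π * (E - x / N)) ^ 2 =
      ‖∑ j ∈ range N, exp (2 * π * I * E) ^ j * ζ⁻¹ ^ (x * j)‖ ^ 2 := by
    intro x
    rw [← sin_sq_pi_mul_mul_sub_div hN E x,
      ← norm_geom_sum_exp_sq N (sin_pi_mul_sub_div_ne_zero hN hE x), hshift]
    simp_rw [mul_pow, ← pow_mul]
  rw [sum_congr rfl fun x _ => hterm x, hζ.sum_norm_sq_sum_mul_pow]
  simp [norm_exp_two_pi_I_mul, sq]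

theorem stmt8_general (k : ℕ) (E : ℝ) (hE : ∀ n : ℤ, (2 : ℝ) ^ k * E ≠ n) :
    (0 ≤ (1 / 2 ^ (2 * k)) * Real.sin (Real.pi * 2 ^ k * E) ^ 2 /
        Real.sin (Real.pi * E) ^ 2 ∧
      (1 / 2 ^ (2 * k)) * Real.sin (Real.pi * 2 ^ k * E) ^ 2 /
        Real.sin (Real.pi * E) ^ 2 ≤ 1) ∧
    ∑ x ∈ Finset.range (2 ^ k),
        (1 / 2 ^ (2 * k)) * Real.sin (Real.pi * 2 ^ k * E) ^ 2 /
          Real.sin (Real.pi * (E - x / 2 ^ k)) ^ 2 = 1 := by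
  have hcast : ((2 ^ k : ℕ) : ℝ) = 2 ^ k := by push_cast; rfl
  have hNne : 2 ^ k ≠ 0 := by positivity
  have hpow : (2 : ℝ) ^ (2 * k) = ((2 ^ k : ℕ) : ℝ) ^ 2 := by rw [hcast, ← pow_mul, mul_comm]
  rw [← hcast] at hE ⊢
  refine ⟨⟨by positivity, ?_⟩, ?_⟩
  · rw [mul_div_assoc, hpow, one_div_mul_eq_div, div_le_one (by positivity)]
    exact sin_sq_mul_div_sin_sq_le _ E
  · simp_rw [mul_div_assoc, ← mul_sum, sum_sin_sq_div_sin_sq_sub hNne hE, hpow]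
    field_simp

/-- The QPE kernel `f_k(E) = sin²(π·2^k·E) / (2^(2k)·sin²(π·E))` lies in `[0,1]`,
and the kernel summed over all `2^k` shifted outcomes equals `1`. -/
theorem stmt8 (k : ℕ) (hk : 1 ≤ k) (E : ℝ) (hE : ∀ n : ℤ, (2 : ℝ) ^ k * E ≠ n) :
    (0 ≤ (1 / 2 ^ (2 * k)) * Real.sin (Real.pi * 2 ^ k * E) ^ 2 /
        Real.sin (Real.pi * E) ^ 2 ∧
      (1 / 2 ^ (2 * k)) * Real.sin (Real.pi * 2 ^ k * E) ^ 2 /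
        Real.sin (Real.pi * E) ^ 2 ≤ 1) ∧
    ∑ x ∈ Finset.range (2 ^ k),
        (1 / 2 ^ (2 * k)) * Real.sin (Real.pi * 2 ^ k * E) ^ 2 /
          Real.sin (Real.pi * (E - x / 2 ^ k)) ^ 2 = 1 :=
  stmt8_general k E hE
end

section
/- Let k ≥ 1 be an integer and E ∈ [0,1) with 2^k·E = x_n + δ_n, where x_n ∈ ℤ and 0 < δ_n < 1. If the outcome x satisfies |x_n − x| ≥ 2 (in the sense of distance on ℤ/2^kℤ), then the QPE outcome probability satisfies (1/2^(2k))·sin²(π·2^k·E)/sin²(π·(E − x/2^k)) ≤ (1/4)·1/(|x_n − x| − 1)². -/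
open Real

lemma sin_lb {a y : ℝ} (ha : 0 ≤ a) (h1 : a ≤ y) (h2 : y ≤ 1 - a) :
    2 * a ≤ Real.sin (Real.pi * y) := by
  have hpi := Real.pi_pos
  rcases le_total y (1/2) with h | h
  · have := Real.mul_le_sin (x := Real.pi * y) (by nlinarith) (by nlinarith)
    calc 2 * a ≤ 2 * y := by linarith
      _ = 2 / Real.pi * (Real.pi * y) := by field_simp
      _ ≤ _ := this
  · have key : Real.sin (Real.pi * y) = Real.sin (Real.pi * (1 - y)) := by
      rw [show Real.pi * (1-y) = Real.pi - Real.pi * y by ring, Real.sin_pi_sub]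
    rw [key]
    have := Real.mul_le_sin (x := Real.pi * (1 - y)) (by nlinarith) (by nlinarith)
    calc 2 * a ≤ 2 * (1 - y) := by linarith
      _ = 2 / Real.pi * (Real.pi * (1-y)) := by field_simp
      _ ≤ _ := this

/-- Algebraic-tail bound for the QPE kernel: if the outcome `x` is at cyclic
distance `d ≥ 2` (on `ℤ/2^kℤ`) from `x_n` where `2^k·E = x_n + δ_n`, `0 < δ_n < 1`,
then the outcome probability is at most `(1/4)·1/(d − 1)²`. -/
theorem stmt9 (k : ℕ) (hk : 1 ≤ k) (E δ : ℝ) (xn x : ℤ)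
    (hE0 : 0 ≤ E) (hE1 : E < 1)
    (hsplit : (2 : ℝ) ^ k * E = xn + δ) (hδ0 : 0 < δ) (hδ1 : δ < 1)
    (d : ℕ) (hd2 : 2 ≤ d) (hdk : d ≤ 2 ^ (k - 1))
    (hdist : ∃ m : ℤ, (xn - x - m * 2 ^ k).natAbs = d) :
    (1 / 2 ^ (2 * k)) * Real.sin (Real.pi * 2 ^ k * E) ^ 2 /
        Real.sin (Real.pi * (E - x / 2 ^ k)) ^ 2
      ≤ (1 / 4) * (1 / ((d : ℝ) - 1) ^ 2) := by
  obtain ⟨m, hm⟩ := hdist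
  have h2k : (0:ℝ) < 2 ^ k := by positivity
  have hdr : (2:ℝ) * d ≤ 2 ^ k := by
    have : (2:ℕ) * d ≤ 2 * 2 ^ (k-1) := by omega
    have h2 : 2 * 2 ^ (k-1) = 2 ^ k := by
      rw [← pow_succ']; congr 1; omega
    exact_mod_cast this.trans_eq h2
  have hd1 : (1:ℝ) ≤ (d:ℝ) - 1 := by
    have : (2:ℝ) ≤ d := by exact_mod_cast hd2
    linarith
  set s : ℤ := xn - x - m * 2 ^ k with hs
  have hsd : (s:ℝ) = d ∨ (s:ℝ) = -d := by
    have : s = (d:ℤ) ∨ s = -(d:ℤ) := by omega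
    rcases this with h | h <;> [left; right] <;> rw [h] <;> push_cast <;> ring
  -- rewrite the argument
  have harg : E - x / 2 ^ k = ((s:ℝ) + δ) / 2 ^ k + m := by
    field_simp
    have : (s:ℝ) = xn - x - m * 2^k := by push_cast [hs]; ring
    rw [this]; nlinarith [hsplit]
  have hsq : Real.sin (Real.pi * (E - x / 2 ^ k)) ^ 2
      = Real.sin (Real.pi * (((s:ℝ) + δ) / 2 ^ k)) ^ 2 := by
    rw [harg, show Real.pi * (((s:ℝ)+δ)/2^k + m) = Real.pi * (((s:ℝ)+δ)/2^k) + m * Real.pi by ring,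
      Real.sin_add_int_mul_pi, mul_pow]
    rcases Int.even_or_odd m with he | ho
    · rw [(Even.neg_one_zpow he : ((-1:ℝ))^m = 1)]; ring
    · rw [(Odd.neg_one_zpow ho : ((-1:ℝ))^m = -1)]; ring
  -- lower bound the denominator
  have hden : (2 * (((d:ℝ) - 1) / 2 ^ k)) ^ 2 ≤ Real.sin (Real.pi * (E - x / 2 ^ k)) ^ 2 := by
    rw [hsq]
    have ha : (0:ℝ) ≤ ((d:ℝ)-1)/2^k := by positivity
    rcases hsd with h | h
    · have hy1 : ((d:ℝ)-1)/2^k ≤ ((s:ℝ)+δ)/2^k := by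
        rw [h]; gcongr <;> linarith
      have hy2 : ((s:ℝ)+δ)/2^k ≤ 1 - ((d:ℝ)-1)/2^k := by
        rw [h, le_sub_iff_add_le, ← add_div, div_le_one h2k]
        linarith
      have := sin_lb ha hy1 hy2
      have hnn : (0:ℝ) ≤ 2 * (((d:ℝ)-1)/2^k) := by positivity
      calc (2 * (((d:ℝ) - 1) / 2 ^ k)) ^ 2 ≤ Real.sin (Real.pi * (((s:ℝ)+δ)/2^k)) ^ 2 := by
            apply sq_le_sq' <;> nlinarith
        _ = _ := rfl
    · have heq : Real.sin (Real.pi * (((s:ℝ)+δ)/2^k)) ^ 2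
          = Real.sin (Real.pi * (((d:ℝ)-δ)/2^k)) ^ 2 := by
        rw [h, show Real.pi * ((-(d:ℝ)+δ)/2^k) = -(Real.pi * (((d:ℝ)-δ)/2^k)) by ring,
          Real.sin_neg]; ring
      rw [heq]
      have hy1 : ((d:ℝ)-1)/2^k ≤ ((d:ℝ)-δ)/2^k := by gcongr <;> linarith
      have hy2 : ((d:ℝ)-δ)/2^k ≤ 1 - ((d:ℝ)-1)/2^k := by
        rw [le_sub_iff_add_le, ← add_div, div_le_one h2k]
        linarith
      have := sin_lb ha hy1 hy2
      apply sq_le_sq' <;> nlinarith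
  -- numerator ≤ 1
  have hnum : Real.sin (Real.pi * 2 ^ k * E) ^ 2 ≤ 1 := by
    rw [sq_le_one_iff_abs_le_one]; exact Real.abs_sin_le_one _
  have hdpos : (0:ℝ) < (2 * (((d:ℝ) - 1) / 2 ^ k)) ^ 2 := by positivity
  have hden0 : (0:ℝ) < Real.sin (Real.pi * (E - x / 2 ^ k)) ^ 2 := lt_of_lt_of_le hdpos hden
  have hnum0 : (0:ℝ) ≤ Real.sin (Real.pi * 2 ^ k * E) ^ 2 := sq_nonneg _
  calc (1 / 2 ^ (2 * k)) * Real.sin (Real.pi * 2 ^ k * E) ^ 2 /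
        Real.sin (Real.pi * (E - x / 2 ^ k)) ^ 2
      ≤ (1 / 2 ^ (2 * k)) * 1 / (2 * (((d:ℝ) - 1) / 2 ^ k)) ^ 2 := by
        apply div_le_div₀ (by positivity) ?_ hdpos hden
        have : (0:ℝ) ≤ 1 / 2 ^ (2*k) := by positivity
        nlinarith
    _ = (1 / 4) * (1 / ((d : ℝ) - 1) ^ 2) := by
        rw [show (2:ℝ)^(2*k) = 2^k * 2^k by rw [two_mul, pow_add]]
        field_simp
        ring
end
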